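/- Let V(θ) = e^{−iθG/2} for a Hermitian matrix G with G² = I, and let A be any Hermitian matrix and ψ a fixed vector. Then the function f(θ) = ⟨V(θ)ψ, A V(θ)ψ⟩ has the form f(θ) = a + b·cos(θ) + c·sin(θ) for real constants a, b, c. -/

import Mathlib

open Matrix

lemma key_expand (d : ℕ) (A : Matrix (Fin d) (Fin d) ℂ)
    (x y : EuclideanSpace ℂ (Fin d)) (c s : ℝ) :
    (inner ℂ (show EuclideanSpace ℂ (Fin d) from (c:ℂ) • x - (Complex.I * s) • y)
      (show EuclideanSpace ℂ (Fin d) from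
        WithLp.toLp 2 <|A.mulVec ((c:ℂ) • x - (Complex.I * s) • y)) : ℂ).re =
    c^2 * (inner ℂ x (show EuclideanSpace ℂ (Fin d) from WithLp.toLp 2 <|A.mulVec x) : ℂ).re
    + s^2 * (inner ℂ y (show EuclideanSpace ℂ (Fin d) from WithLp.toLp 2 <|A.mulVec y) : ℂ).re
    + c*s*((inner ℂ x (show EuclideanSpace ℂ (Fin d) from WithLp.toLp 2 <|A.mulVec y) : ℂ).im
         - (inner ℂ y (show EuclideanSpace ℂ (Fin d) from WithLp.toLp 2 <|A.mulVec x) : ℂ).im) := by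
  have hAv : (show EuclideanSpace ℂ (Fin d) from
      WithLp.toLp 2 <|A.mulVec ((c:ℂ) • x - (Complex.I * s) • y)) =
      (c:ℂ) • (show EuclideanSpace ℂ (Fin d) from WithLp.toLp 2 <|A.mulVec x)
      - (Complex.I * s) • (show EuclideanSpace ℂ (Fin d) from WithLp.toLp 2 <|A.mulVec y) := by
    dsimp only
    rw [Matrix.mulVec_sub,
      Matrix.mulVec_smul, Matrix.mulVec_smul, WithLp.toLp_sub, WithLp.toLp_smul, WithLp.toLp_smul]
  rw [hAv]
  simp only [inner_sub_left, inner_sub_right, inner_smul_left, inner_smul_right,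
    _root_.map_mul, Complex.conj_ofReal, Complex.conj_I]
  set p := (inner ℂ x (show EuclideanSpace ℂ (Fin d) from WithLp.toLp 2 <|A.mulVec x) : ℂ)
  set q := (inner ℂ y (show EuclideanSpace ℂ (Fin d) from WithLp.toLp 2 <|A.mulVec y) : ℂ)
  set r := (inner ℂ x (show EuclideanSpace ℂ (Fin d) from WithLp.toLp 2 <|A.mulVec y) : ℂ)
  set t := (inner ℂ y (show EuclideanSpace ℂ (Fin d) from WithLp.toLp 2 <|A.mulVec x) : ℂ)
  simp only [Complex.sub_re, Complex.add_re, Complex.sub_im, Complex.add_im,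
    Complex.mul_re, Complex.mul_im, Complex.I_re, Complex.I_im,
    Complex.ofReal_re, Complex.ofReal_im, Complex.neg_re, Complex.neg_im,
    neg_mul, mul_neg, neg_neg]
  ring

theorem expectation_is_degree_one_trig (d : ℕ)
    (G A : Matrix (Fin d) (Fin d) ℂ)
    (hG : G.IsHermitian) (hG2 : G * G = 1)
    (hA : A.IsHermitian)
    (ψ : EuclideanSpace ℂ (Fin d))
    (V : ℝ → Matrix (Fin d) (Fin d) ℂ)
    (hV : V = fun (θ : ℝ) => Complex.cos ((θ : ℂ) / 2) • (1 : Matrix (Fin d) (Fin d) ℂ) -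
      (Complex.I * Complex.sin ((θ : ℂ) / 2)) • G)
    (f : ℝ → ℝ)
    (hf : f = fun θ => (inner ℂ
        (show EuclideanSpace ℂ (Fin d) from WithLp.toLp 2 ((V θ).mulVec ψ))
        (show EuclideanSpace ℂ (Fin d) from WithLp.toLp 2 (A.mulVec ((V θ).mulVec ψ))) : ℂ).re) :
    ∃ a b c : ℝ, ∀ θ : ℝ, f θ = a + b * Real.cos θ + c * Real.sin θ := by
  subst hV hf
  set Gψ : EuclideanSpace ℂ (Fin d) := WithLp.toLp 2 (G.mulVec ψ) with hGψ
  set α := (inner ℂ ψ (show EuclideanSpace ℂ (Fin d) from WithLp.toLp 2 <|A.mulVec ψ) : ℂ).re with hα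
  set β := (inner ℂ Gψ (show EuclideanSpace ℂ (Fin d) from WithLp.toLp 2 <|A.mulVec Gψ) : ℂ).re with hβ
  set γ := (inner ℂ ψ (show EuclideanSpace ℂ (Fin d) from WithLp.toLp 2 <|A.mulVec Gψ) : ℂ).im
    - (inner ℂ Gψ (show EuclideanSpace ℂ (Fin d) from WithLp.toLp 2 <|A.mulVec ψ) : ℂ).im with hγ
  refine ⟨(α + β)/2, (α - β)/2, γ/2, fun θ => ?_⟩
  have hcast : ((θ : ℂ)/2) = ((θ/2 : ℝ) : ℂ) := by push_cast; ring
  have hVθ : (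
      (Complex.cos ((θ : ℂ) / 2) • (1 : Matrix (Fin d) (Fin d) ℂ) -
      (Complex.I * Complex.sin ((θ : ℂ) / 2)) • G).mulVec ψ) =
      WithLp.ofLp (((Real.cos (θ/2) : ℝ) : ℂ) • ψ - (Complex.I * (Real.sin (θ/2) : ℝ)) • Gψ) := by
    rw [Matrix.sub_mulVec, Matrix.smul_mulVec, Matrix.smul_mulVec,
      Matrix.one_mulVec, hcast, ← Complex.ofReal_cos, ← Complex.ofReal_sin,
      WithLp.ofLp_sub, WithLp.ofLp_smul, WithLp.ofLp_smul]
  simp only [hVθ, WithLp.toLp_ofLp]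
  erw [key_expand d A ψ Gψ (Real.cos (θ/2)) (Real.sin (θ/2))]
  have h1 : Real.cos θ = 2 * Real.cos (θ/2)^2 - 1 := by
    have := Real.cos_two_mul (θ/2); rw [show 2*(θ/2) = θ by ring] at this; linarith
  have h2 : Real.sin θ = 2 * Real.sin (θ/2) * Real.cos (θ/2) := by
    have := Real.sin_two_mul (θ/2); rw [show 2*(θ/2) = θ by ring] at this; linarith
  have h3 : Real.sin (θ/2)^2 = 1 - Real.cos (θ/2)^2 := by
    have := Real.sin_sq_add_cos_sq (θ/2); linarith
  rw [h1, h2, h3]; ring
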